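/- arXiv:2506.15038 — 4 statements merged into one kernel-verified Lean document; each statement's English description precedes it below -/
import Mathlib

section
/- Let K be a locally finite simplicial complex (every vertex belongs to only finitely many simplices) and q ∈ ℕ₀. Then the graph G_q(K) has an infinite connected component if and only if the graph G̃_{q+1}(K) has an infinite connected component. -/
/-- The q-graph (up-connectivity graph) of a simplicial complex `K`: vertices are the
q-simplices of `K`, two distinct q-simplices are adjacent iff some (q+1)-simplex of `K`
contains both. -/
def upGraph {V : Type*} (K : Set (Finset V)) (q : ℕ) :
    SimpleGraph {σ : Finset V // σ ∈ K ∧ σ.card = q + 1} where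
  Adj σ ρ := σ ≠ ρ ∧ ∃ π ∈ K, π.card = q + 2 ∧ σ.1 ⊆ π ∧ ρ.1 ⊆ π
  symm := by
    constructor
    rintro σ ρ ⟨h, π, hπK, hπc, h1, h2⟩
    exact ⟨h.symm, π, hπK, hπc, h2, h1⟩
  loopless := by constructor; rintro σ ⟨h, -⟩; exact h rfl

/-- The down-connectivity graph G̃_{q+1}(K): vertices are the (q+1)-simplices of `K`, two
distinct (q+1)-simplices are adjacent iff some q-simplex of `K` is contained in both. -/
def downGraph {V : Type*} (K : Set (Finset V)) (q : ℕ) :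
    SimpleGraph {π : Finset V // π ∈ K ∧ π.card = q + 2} where
  Adj π τ := π ≠ τ ∧ ∃ σ ∈ K, σ.card = q + 1 ∧ σ ⊆ π.1 ∧ σ ⊆ τ.1
  symm := by
    constructor
    rintro π τ ⟨h, σ, hσK, hσc, h1, h2⟩
    exact ⟨h.symm, σ, hσK, hσc, h2, h1⟩
  loopless := by constructor; rintro π ⟨h, -⟩; exact h rfl

/-!
Relate q-simplices and (q+1)-simplices by inclusion. Two simplices adjacent in one graph share an
incident simplex of the other kind, and simplices of the other kind incident to a common simplex
are equal or adjacent; so sending each simplex to an incident one maps every connected component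
into a single component of the other graph. The map has finite fibres: a (q+1)-simplex has finitely
many faces, and by local finiteness a q-simplex has finitely many cofaces. Hence an infinite
component is sent into an infinite one, provided every simplex in it has an incident simplex: a
(q+1)-simplex always has a q-face, and a q-simplex in an infinite component of G_q(K) is not
isolated, so it lies in a (q+1)-simplex.
-/

namespace SimpleGraph

variable {α β : Type*} {G : SimpleGraph α} {H : SimpleGraph β}

lemma ConnectedComponent.mem_support_of_mem_supp {c : G.ConnectedComponent}
    (hc : c.supp.Nontrivial) {a : α} (ha : a ∈ c.supp) : a ∈ G.support := by
  obtain ⟨a', ha', hne⟩ := hc.exists_ne a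
  exact mem_support_of_reachable hne.symm (c.reachable_of_mem_supp ha ha')

section IncidenceRelation

variable {R : α → β → Prop}

lemma Reachable.of_rel (hG : ∀ a a', G.Adj a a' → ∃ b, R a b ∧ R a' b)
    (hH : ∀ a b b', R a b → R a b' → b ≠ b' → H.Adj b b') {a a' : α} (h : G.Reachable a a')
    {b b' : β} (hb : R a b) (hb' : R a' b') : H.Reachable b b' := by
  have common : ∀ {a b b'}, R a b → R a b' → H.Reachable b b' := fun {a b b'} hb hb' => by
    by_cases hbb : b = b'
    · exact hbb ▸ .rfl
    · exact (hH a b b' hb hb' hbb).reachable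
  obtain ⟨w⟩ := h
  induction w generalizing b with
  | nil => exact common hb hb'
  | cons hadj _ ih =>
    obtain ⟨b₁, hb₁, hb₁'⟩ := hG _ _ hadj
    exact (common hb hb₁).trans (ih hb₁' hb')

theorem ConnectedComponent.exists_supp_infinite_of_rel
    (hG : ∀ a a', G.Adj a a' → ∃ b, R a b ∧ R a' b)
    (hH : ∀ a b b', R a b → R a b' → b ≠ b' → H.Adj b b') (hfin : ∀ b, {a | R a b}.Finite)
    (c : G.ConnectedComponent) (hc : c.supp.Infinite) (hR : ∀ a ∈ c.supp, ∃ b, R a b) :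
    ∃ d : H.ConnectedComponent, d.supp.Infinite := by
  obtain ⟨a₀, ha₀⟩ := hc.nonempty
  obtain ⟨b₀, hb₀⟩ := hR a₀ ha₀
  refine ⟨H.connectedComponentMk b₀, fun hd => hc ?_⟩
  have hcover : c.supp ⊆ ⋃ b ∈ (H.connectedComponentMk b₀).supp, {a | R a b} := by
    intro a ha
    obtain ⟨b, hb⟩ := hR a ha
    exact Set.mem_biUnion
      (ConnectedComponent.sound ((c.reachable_of_mem_supp ha₀ ha).of_rel hG hH hb₀ hb).symm) hb
  exact (hd.biUnion fun b _ => hfin b).subset hcover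

end IncidenceRelation

end SimpleGraph

section Simplices

variable {V : Type*} {K : Set (Finset V)} {q : ℕ}

lemma finite_setOf_faces (π : Finset V) :
    {σ : {σ : Finset V // σ ∈ K ∧ σ.card = q + 1} | σ.1 ⊆ π}.Finite :=
  (π.powerset.finite_toSet.preimage Subtype.val_injective.injOn).subset
    fun _ h => Finset.mem_powerset.2 h

lemma finite_setOf_cofaces (hlocfin : ∀ v : V, {σ : Finset V | σ ∈ K ∧ v ∈ σ}.Finite)
    (σ : {σ : Finset V // σ ∈ K ∧ σ.card = q + 1}) :
    {π : {π : Finset V // π ∈ K ∧ π.card = q + 2} | σ.1 ⊆ π.1}.Finite := by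
  obtain ⟨v, hv⟩ : σ.1.Nonempty := Finset.card_pos.1 (by rw [σ.2.2]; omega)
  exact ((hlocfin v).preimage Subtype.val_injective.injOn).subset fun π h => ⟨π.2.1, h hv⟩

lemma exists_face (hdown : ∀ σ ∈ K, ∀ ρ : Finset V, ρ ⊆ σ → ρ.Nonempty → ρ ∈ K)
    (π : {π : Finset V // π ∈ K ∧ π.card = q + 2}) :
    ∃ σ : {σ : Finset V // σ ∈ K ∧ σ.card = q + 1}, σ.1 ⊆ π.1 := by
  obtain ⟨σ, hσπ, hσc⟩ := Finset.exists_subset_card_eq (by rw [π.2.2]; omega : q + 1 ≤ π.1.card)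
  have hσ : σ.Nonempty := Finset.card_pos.1 (by rw [hσc]; omega)
  exact ⟨⟨σ, hdown _ π.2.1 σ hσπ hσ, hσc⟩, hσπ⟩

lemma exists_coface_of_mem_support {σ : {σ : Finset V // σ ∈ K ∧ σ.card = q + 1}}
    (hσ : σ ∈ (upGraph K q).support) :
    ∃ π : {π : Finset V // π ∈ K ∧ π.card = q + 2}, σ.1 ⊆ π.1 := by
  obtain ⟨-, -, π, hπK, hπc, hσπ, -⟩ := (SimpleGraph.mem_support _).1 hσ
  exact ⟨⟨π, hπK, hπc⟩, hσπ⟩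

end Simplices

theorem stmt3_general {V : Type*} (K : Set (Finset V)) (q : ℕ)
    (hdown : ∀ σ ∈ K, ∀ ρ : Finset V, ρ ⊆ σ → ρ.Nonempty → ρ ∈ K)
    (hlocfin : ∀ v : V, {σ : Finset V | σ ∈ K ∧ v ∈ σ}.Finite) :
    (∃ c : (upGraph K q).ConnectedComponent, c.supp.Infinite) ↔
      (∃ c : (downGraph K q).ConnectedComponent, c.supp.Infinite) := by
  constructor
  · rintro ⟨c, hc⟩
    refine c.exists_supp_infinite_of_rel (R := fun σ π => σ.1 ⊆ π.1) ?_ ?_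
      (fun π => finite_setOf_faces π.1) hc
      fun σ hσ => exists_coface_of_mem_support (c.mem_support_of_mem_supp hc.nontrivial hσ)
    · rintro σ ρ ⟨-, π, hπK, hπc, hσ, hρ⟩
      exact ⟨⟨π, hπK, hπc⟩, hσ, hρ⟩
    · exact fun σ π τ hπ hτ hne => ⟨hne, σ.1, σ.2.1, σ.2.2, hπ, hτ⟩
  · rintro ⟨c, hc⟩
    refine c.exists_supp_infinite_of_rel (R := fun π σ => σ.1 ⊆ π.1) ?_ ?_
      (finite_setOf_cofaces hlocfin) hc fun π _ => exists_face hdown π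
    · rintro π τ ⟨-, σ, hσK, hσc, hπ, hτ⟩
      exact ⟨⟨σ, hσK, hσc⟩, hπ, hτ⟩
    · exact fun π σ ρ hσ hρ hne => ⟨hne, π.1, π.2.1, π.2.2, hσ, hρ⟩

/-- For a locally finite simplicial complex K, the graph G_q(K) has an infinite
connected component iff the graph G̃_{q+1}(K) has an infinite connected component. -/
theorem stmt3 {V : Type*} [DecidableEq V] (K : Set (Finset V)) (q : ℕ)
    (hne : ∀ σ ∈ K, σ.Nonempty)
    (hdown : ∀ σ ∈ K, ∀ ρ : Finset V, ρ ⊆ σ → ρ.Nonempty → ρ ∈ K)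
    (hlocfin : ∀ v : V, {σ : Finset V | σ ∈ K ∧ v ∈ σ}.Finite) :
    (∃ c : (upGraph K q).ConnectedComponent, c.supp.Infinite) ↔
      (∃ c : (downGraph K q).ConnectedComponent, c.supp.Infinite) :=
  stmt3_general K q hdown hlocfin
end

section
/- Let K be a simplicial complex and 0 ≤ r ≤ q. If the q-graph G_q(K) has an infinite connected component, then the r-graph G_r(K) also has an infinite connected component. -/
open Finset SimpleGraph

section

variable {V : Type*}

def IsDownClosed (K : Set (Finset V)) : Prop :=
  ∀ σ ∈ K, ∀ ρ : Finset V, ρ ⊆ σ → ρ.Nonempty → ρ ∈ K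

abbrev Simplices (K : Set (Finset V)) (r : ℕ) : Type _ :=
  {σ : Finset V // σ ∈ K ∧ σ.card = r + 1}

namespace IsDownClosed

variable {K : Set (Finset V)} {r : ℕ}

lemma exists_simplex_mem_subset (hK : IsDownClosed K) {s : Finset V} (hs : s ∈ K)
    (hr : r + 1 ≤ #s) {v : V} (hv : v ∈ s) : ∃ τ : Simplices K r, v ∈ τ.1 ∧ τ.1 ⊆ s := by
  obtain ⟨t, hvt, hts, htc⟩ :=
    exists_subsuperset_card_eq (singleton_subset_iff.2 hv) (by simp) hr
  exact ⟨⟨t, hK s hs t hts ⟨v, hvt (mem_singleton_self v)⟩, htc⟩, hvt (mem_singleton_self v), hts⟩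

lemma exists_simplex_subset (hK : IsDownClosed K) {s : Finset V} (hs : s ∈ K)
    (hr : r + 1 ≤ #s) : ∃ τ : Simplices K r, τ.1 ⊆ s := by
  obtain ⟨v, hv⟩ := card_pos.1 (by omega : 0 < #s)
  obtain ⟨τ, -, hτ⟩ := hK.exists_simplex_mem_subset hs hr hv
  exact ⟨τ, hτ⟩

lemma exists_upGraph_adj_card_sdiff_lt [DecidableEq V] (hK : IsDownClosed K) {s : Finset V}
    (hs : s ∈ K) {τ₁ τ₂ : Simplices K r} (h₁ : τ₁.1 ⊆ s) (h₂ : τ₂.1 ⊆ s) (hne : τ₁ ≠ τ₂) :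
    ∃ τ : Simplices K r, τ.1 ⊆ s ∧ (upGraph K r).Adj τ₁ τ ∧ #(τ.1 \ τ₂.1) < #(τ₁.1 \ τ₂.1) := by
  have not_subset_of_ne {τ τ' : Simplices K r} (hne : τ ≠ τ') : ¬τ.1 ⊆ τ'.1 := fun h =>
    hne (Subtype.ext (eq_of_subset_of_card_le h (by rw [τ.2.2, τ'.2.2])))
  obtain ⟨x, hx₁, hx₂⟩ := not_subset.1 (not_subset_of_ne hne)
  obtain ⟨y, hy₂, hy₁⟩ := not_subset.1 (not_subset_of_ne hne.symm)
  -- exchange `x` for `y`; both simplices lie in the `(r+1)`-simplex `insert y τ₁`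
  set τ := insert y (τ₁.1.erase x)
  have hτs : τ ⊆ s := insert_subset (h₂ hy₂) ((erase_subset _ _).trans h₁)
  have hτc : #τ = r + 1 := by
    rw [card_insert_of_notMem (fun h => hy₁ (mem_of_mem_erase h)), card_erase_of_mem hx₁, τ₁.2.2]
    omega
  have hπs : insert y τ₁.1 ⊆ s := insert_subset (h₂ hy₂) h₁
  refine ⟨⟨τ, hK s hs τ hτs ⟨y, mem_insert_self _ _⟩, hτc⟩, hτs, ⟨?_, insert y τ₁.1,
    hK s hs _ hπs ⟨y, mem_insert_self _ _⟩, ?_, subset_insert _ _,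
    insert_subset_insert _ (erase_subset _ _)⟩, ?_⟩
  · exact fun h => hy₁ (h ▸ mem_insert_self y _)
  · rw [card_insert_of_notMem hy₁, τ₁.2.2]
  · have : τ \ τ₂.1 = (τ₁.1 \ τ₂.1).erase x := by ext; grind
    rw [this]
    exact card_erase_lt_of_mem (mem_sdiff.2 ⟨hx₁, hx₂⟩)

lemma upGraph_reachable_of_subset (hK : IsDownClosed K) {s : Finset V} (hs : s ∈ K)
    {τ₁ τ₂ : Simplices K r} (h₁ : τ₁.1 ⊆ s) (h₂ : τ₂.1 ⊆ s) :
    (upGraph K r).Reachable τ₁ τ₂ := by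
  classical
  induction hn : #(τ₁.1 \ τ₂.1) using Nat.strong_induction_on generalizing τ₁ with
  | _ n ih =>
    by_cases hne : τ₁ = τ₂
    · exact hne ▸ Reachable.refl _
    obtain ⟨τ, hτs, hadj, hlt⟩ := hK.exists_upGraph_adj_card_sdiff_lt hs h₁ h₂ hne
    exact hadj.reachable.trans (ih _ (hn ▸ hlt) hτs rfl)

lemma upGraph_reachable_of_reachable (hK : IsDownClosed K) {q : ℕ} (hrq : r ≤ q)
    {σ ρ : Simplices K q} (h : (upGraph K q).Reachable σ ρ) {τ₁ τ₂ : Simplices K r}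
    (h₁ : τ₁.1 ⊆ σ.1) (h₂ : τ₂.1 ⊆ ρ.1) : (upGraph K r).Reachable τ₁ τ₂ := by
  obtain ⟨w⟩ := h
  induction w generalizing τ₁ with
  | @nil σ => exact hK.upGraph_reachable_of_subset σ.2.1 h₁ h₂
  | @cons σ σ' ρ hadj _ ih =>
    obtain ⟨-, π, hπ, -, hσπ, hσ'π⟩ := hadj
    obtain ⟨τ, hτ⟩ := hK.exists_simplex_subset (r := r) σ'.2.1 (by rw [σ'.2.2]; omega)
    exact (hK.upGraph_reachable_of_subset hπ (h₁.trans hσπ) (hτ.trans hσ'π)).trans (ih hτ h₂)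

lemma infinite_setOf_simplex_subset (hK : IsDownClosed K) {q : ℕ} (hrq : r ≤ q)
    {A : Set (Simplices K q)} (hA : A.Infinite) :
    {τ : Simplices K r | ∃ σ ∈ A, τ.1 ⊆ σ.1}.Infinite := by
  classical
  intro hF
  have hcover : ∀ σ ∈ A, σ.1 ⊆ hF.toFinset.biUnion Subtype.val := fun σ hσ v hv => by
    obtain ⟨τ, hvτ, hτσ⟩ :=
      hK.exists_simplex_mem_subset (r := r) σ.2.1 (by rw [σ.2.2]; omega) hv
    exact mem_biUnion.2 ⟨τ, hF.mem_toFinset.2 ⟨σ, hσ, hτσ⟩, hvτ⟩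
  exact hA (((hF.toFinset.biUnion Subtype.val).powerset.finite_toSet.preimage
    Subtype.val_injective.injOn).subset fun σ hσ => mem_powerset.2 (hcover σ hσ))

end IsDownClosed

end

theorem stmt4_general {V : Type*} (K : Set (Finset V)) (q r : ℕ) (hrq : r ≤ q)
    (hdown : ∀ σ ∈ K, ∀ ρ : Finset V, ρ ⊆ σ → ρ.Nonempty → ρ ∈ K)
    (hperc : ∃ c : (upGraph K q).ConnectedComponent, c.supp.Infinite) :
    ∃ c : (upGraph K r).ConnectedComponent, c.supp.Infinite := by
  obtain ⟨C, hC⟩ := hperc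
  obtain ⟨σ₀, hσ₀⟩ := hC.nonempty
  obtain ⟨τ₀, hτ₀⟩ :=
    IsDownClosed.exists_simplex_subset (r := r) hdown σ₀.2.1 (by rw [σ₀.2.2]; omega)
  refine ⟨(upGraph K r).connectedComponentMk τ₀,
    (IsDownClosed.infinite_setOf_simplex_subset hdown hrq hC).mono ?_⟩
  rintro τ ⟨σ, hσ, hτσ⟩
  exact ConnectedComponent.sound <| IsDownClosed.upGraph_reachable_of_reachable hdown hrq
    (C.reachable_of_mem_supp hσ hσ₀) hτσ hτ₀

/-- If K q-percolates (G_q(K) has an infinite connected component) then K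
r-percolates for every r ≤ q. -/
theorem stmt4 {V : Type*} [DecidableEq V] (K : Set (Finset V)) (q r : ℕ) (hrq : r ≤ q)
    (hne : ∀ σ ∈ K, σ.Nonempty)
    (hdown : ∀ σ ∈ K, ∀ ρ : Finset V, ρ ⊆ σ → ρ.Nonempty → ρ ∈ K)
    (hperc : ∃ c : (upGraph K q).ConnectedComponent, c.supp.Infinite) :
    ∃ c : (upGraph K r).ConnectedComponent, c.supp.Infinite :=
  stmt4_general K q r hrq hdown hperc
end

section
/- Fix q ∈ ℕ₀ and p₀ ∈ [0,1). For k ∈ ℕ₀ let N(k) := ⌊k/(q+1)⌋. If τ is a Poisson random variable with parameter b ≥ 1, then E[p₀^{N(τ)}] ≤ (q+1) · b^q · exp( −b (1 − p₀^{1/(q+1)}) ). In particular, E[p₀^{N(τ)}] → 0 as b → ∞. -/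
/-!
Write `r = p₀ ^ (1/(q+1))`, so that `p₀ ^ ⌊k/(q+1)⌋ ≤ r ^ (k - q)`. The first `q` Poisson weights
are each at most `e^{-b} b^q` (this is where `b ≥ 1` enters), and after shifting the index by `q`
the remaining weights are dominated by `e^{-b} b^q (b r)^k / k!`, whose sum is
`e^{-b} b^q e^{b r}`. Since `r < 1`, the bound `(q+1) b^q e^{-b(1-r)}` tends to zero.
-/

open Real Filter Topology Finset Nat

section PoissonBound

variable {p r b : ℝ} {q : ℕ}

lemma rpow_one_div_succ_pow (hp : 0 ≤ p) : (p ^ ((1 : ℝ) / (q + 1))) ^ (q + 1) = p := by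
  simpa [one_div] using Real.rpow_inv_natCast_pow hp q.succ_ne_zero

lemma pow_succ_pow_add_div_succ_le (hr0 : 0 ≤ r) (hr1 : r ≤ 1) (k : ℕ) :
    (r ^ (q + 1)) ^ ((k + q) / (q + 1)) ≤ r ^ k := by
  rw [← pow_mul]
  refine pow_le_pow_of_le_one hr0 hr1 ?_
  have := Nat.div_add_mod (k + q) (q + 1)
  have := Nat.mod_lt (k + q) q.succ_pos
  linarith

lemma summable_poisson_mul_pow (hb : 0 ≤ b) (hp0 : 0 ≤ p) (hp1 : p ≤ 1) (n : ℕ → ℕ) :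
    Summable fun k : ℕ => exp (-b) * b ^ k / k ! * p ^ n k := by
  refine ((summable_pow_div_factorial b).mul_left (exp (-b))).of_nonneg_of_le
    (fun k => by positivity) fun k => ?_
  calc exp (-b) * b ^ k / k ! * p ^ n k ≤ exp (-b) * b ^ k / k ! * 1 := by
        gcongr; exact pow_le_one₀ hp0 hp1
    _ = exp (-b) * (b ^ k / k !) := by ring

lemma poisson_mul_pow_le_of_le (hb : 1 ≤ b) (hp0 : 0 ≤ p) (hp1 : p ≤ 1) {i : ℕ} (hi : i ≤ q)
    (n : ℕ) : exp (-b) * b ^ i / i ! * p ^ n ≤ exp (-b) * b ^ q := by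
  have hfact : (1 : ℝ) ≤ i ! := Nat.one_le_cast.2 i.factorial_pos
  calc exp (-b) * b ^ i / i ! * p ^ n ≤ exp (-b) * b ^ i / 1 * 1 := by
        gcongr; exact pow_le_one₀ hp0 hp1
    _ ≤ exp (-b) * b ^ q := by
        rw [div_one, mul_one]; gcongr

lemma poisson_mul_pow_add_le (hb : 0 ≤ b) (hr0 : 0 ≤ r) (hr1 : r ≤ 1) (k : ℕ) :
    exp (-b) * b ^ (k + q) / (k + q)! * (r ^ (q + 1)) ^ ((k + q) / (q + 1))
      ≤ exp (-b) * b ^ q * ((b * r) ^ k / k !) := by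
  have hfact : (k ! : ℝ) ≤ (k + q)! := by exact_mod_cast Nat.factorial_le (Nat.le_add_right k q)
  calc exp (-b) * b ^ (k + q) / (k + q)! * (r ^ (q + 1)) ^ ((k + q) / (q + 1))
      = exp (-b) * b ^ q * (b ^ k * (r ^ (q + 1)) ^ ((k + q) / (q + 1)) / (k + q)!) := by ring
    _ ≤ exp (-b) * b ^ q * (b ^ k * r ^ k / k !) := by
        gcongr; exact pow_succ_pow_add_div_succ_le hr0 hr1 k
    _ = exp (-b) * b ^ q * ((b * r) ^ k / k !) := by rw [mul_pow]

theorem tsum_poisson_mul_pow_div_succ_le (hb : 1 ≤ b) (hr0 : 0 ≤ r) (hr1 : r ≤ 1) :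
    ∑' k : ℕ, exp (-b) * b ^ k / k ! * (r ^ (q + 1)) ^ (k / (q + 1))
      ≤ (q + 1) * b ^ q * exp (-b * (1 - r)) := by
  set f : ℕ → ℝ := fun k => exp (-b) * b ^ k / k ! * (r ^ (q + 1)) ^ (k / (q + 1))
  have hb0 : 0 ≤ b := zero_le_one.trans hb
  have hf : Summable f := summable_poisson_mul_pow hb0 (by positivity) (pow_le_one₀ hr0 hr1) _
  have head : ∑ i ∈ range q, f i ≤ q * (exp (-b) * b ^ q) := by
    simpa using Finset.sum_le_sum fun i hi =>
      poisson_mul_pow_le_of_le hb (by positivity) (pow_le_one₀ hr0 hr1) (mem_range.1 hi).le _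
  have tail : ∑' k, f (k + q) ≤ exp (-b) * b ^ q * exp (b * r) := by
    calc ∑' k, f (k + q) ≤ ∑' k : ℕ, exp (-b) * b ^ q * ((b * r) ^ k / k !) :=
          ((summable_nat_add_iff q).2 hf).tsum_le_tsum (poisson_mul_pow_add_le hb0 hr0 hr1)
            ((summable_pow_div_factorial _).mul_left _)
      _ = exp (-b) * b ^ q * exp (b * r) := by
          rw [tsum_mul_left, Real.exp_eq_exp_ℝ, NormedSpace.exp_eq_tsum_div]
  have hexp : exp (-b) * b ^ q ≤ exp (-b) * b ^ q * exp (b * r) :=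
    le_mul_of_one_le_right (by positivity) (one_le_exp (by positivity))
  calc ∑' k, f k = ∑ i ∈ range q, f i + ∑' k, f (k + q) := (hf.sum_add_tsum_nat_add q).symm
    _ ≤ q * (exp (-b) * b ^ q * exp (b * r)) + exp (-b) * b ^ q * exp (b * r) := by
        gcongr
        exact head.trans (by gcongr)
    _ = (q + 1) * b ^ q * exp (-b * (1 - r)) := by
        rw [show -b * (1 - r) = -b + b * r by ring, exp_add]; ring

end PoissonBound

lemma tendsto_mul_pow_mul_exp_neg_mul_atTop (C : ℝ) (q : ℕ) {c : ℝ} (hc : 0 < c) :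
    Tendsto (fun b : ℝ => C * b ^ q * exp (-b * c)) atTop (𝓝 0) := by
  have h := (tendsto_rpow_mul_exp_neg_mul_atTop_nhds_zero q c hc).const_mul C
  rw [mul_zero] at h
  refine h.congr fun b => ?_
  rw [Real.rpow_natCast]
  ring_nf

/-- For q ∈ ℕ₀, p₀ ∈ [0,1), N(k) = ⌊k/(q+1)⌋ and τ ~ Po(b) with b ≥ 1, we have
E[p₀^{N(τ)}] ≤ (q+1) b^q exp(−b(1 − p₀^{1/(q+1)})); in particular E[p₀^{N(τ)}] → 0
as b → ∞. -/
theorem stmt6 (q : ℕ) (p₀ : ℝ) (hp₀ : 0 ≤ p₀) (hp₁ : p₀ < 1) :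
    (∀ b : ℝ, 1 ≤ b →
      (∑' k : ℕ, Real.exp (-b) * b ^ k / (Nat.factorial k) * p₀ ^ (k / (q + 1)))
        ≤ (q + 1) * b ^ q * Real.exp (-b * (1 - p₀ ^ ((1 : ℝ) / (q + 1))))) ∧
    Filter.Tendsto
      (fun b : ℝ => ∑' k : ℕ, Real.exp (-b) * b ^ k / (Nat.factorial k) * p₀ ^ (k / (q + 1)))
      Filter.atTop (nhds 0) := by
  have hr0 : 0 ≤ p₀ ^ ((1 : ℝ) / (q + 1)) := Real.rpow_nonneg hp₀ _
  have hr1 : p₀ ^ ((1 : ℝ) / (q + 1)) < 1 := Real.rpow_lt_one hp₀ hp₁ (by positivity)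
  have bound : ∀ b : ℝ, 1 ≤ b →
      (∑' k : ℕ, Real.exp (-b) * b ^ k / (Nat.factorial k) * p₀ ^ (k / (q + 1)))
        ≤ (q + 1) * b ^ q * Real.exp (-b * (1 - p₀ ^ ((1 : ℝ) / (q + 1)))) := fun b hb => by
    simpa only [rpow_one_div_succ_pow hp₀] using
      tsum_poisson_mul_pow_div_succ_le (q := q) hb hr0 hr1.le
  refine ⟨bound, squeeze_zero' ?_ ?_
    (tendsto_mul_pow_mul_exp_neg_mul_atTop (q + 1) q (sub_pos.2 hr1))⟩
  · filter_upwards [eventually_ge_atTop 0] with b hb using tsum_nonneg fun k => by positivity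
  · filter_upwards [eventually_ge_atTop 1] with b hb using bound b hb
end

section
/- Let b > 0, let ϑ be a Poisson random variable with parameter b, and let N be an ℕ₀ ∪ {∞}-valued random variable independent of ϑ. Then P(0 < N ≤ ϑ) ≤ b e^b · P(N = ϑ + 1). -/
open MeasureTheory ProbabilityTheory

open scoped ENNReal NNReal Nat

/-! Conditioning on `N = n + 1` and using independence, it suffices to compare a Poisson tail
with a single Poisson weight:
`P(ϑ > n) ≤ b^(n+1) / (n+1)! ≤ b e^b · e^(-b) b^n / n! = b e^b · P(ϑ = n)`.
The tail bound comes from `m! k! ≤ (m+k)!`, which gives `P(ϑ = m + k) ≤ b^m / m! · P(ϑ = k)`;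
summing over `k` uses that the Poisson weights have total mass one. -/

lemma MeasureTheory.measure_eq_tsum_measure_inter_preimage_singleton {Ω β : Type*}
    {mΩ : MeasurableSpace Ω} {μ : Measure Ω} [Countable β] {Y : Ω → β} {s : Set Ω}
    (hs : ∀ y, MeasurableSet (s ∩ Y ⁻¹' {y})) : μ s = ∑' y, μ (s ∩ Y ⁻¹' {y}) := by
  have hdisj : Pairwise fun y y' => Disjoint (s ∩ Y ⁻¹' {y}) (s ∩ Y ⁻¹' {y'}) :=
    fun y y' hyy' => ((Set.disjoint_singleton.2 hyy').preimage Y).mono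
      Set.inter_subset_right Set.inter_subset_right
  rw [← measure_iUnion hdisj hs, ← Set.inter_iUnion, ← Set.preimage_iUnion,
    Set.iUnion_singleton_eq_range, Set.range_id', Set.preimage_univ, Set.inter_univ]

theorem ProbabilityTheory.IndepFun.measure_setOf_mem_le_mul {Ω α β : Type*}
    {mΩ : MeasurableSpace Ω} {μ : Measure Ω} [MeasurableSpace α] [MeasurableSpace β]
    [Countable β] [MeasurableSingletonClass β] {X : Ω → α} {Y : Ω → β}
    (hXY : IndepFun X Y μ) (hX : Measurable X) (hY : Measurable Y) {A B : β → Set α}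
    (hA : ∀ y, MeasurableSet (A y)) (hB : ∀ y, MeasurableSet (B y)) {c : ℝ≥0∞}
    (hAB : ∀ y, μ (X ⁻¹' A y) ≤ c * μ (X ⁻¹' B y)) :
    μ {ω | X ω ∈ A (Y ω)} ≤ c * μ {ω | X ω ∈ B (Y ω)} := by
  have hsplit (C : β → Set α) (hC : ∀ y, MeasurableSet (C y)) :
      μ {ω | X ω ∈ C (Y ω)} = ∑' y, μ (X ⁻¹' C y) * μ (Y ⁻¹' {y}) := by
    have hfiber (y : β) : {ω | X ω ∈ C (Y ω)} ∩ Y ⁻¹' {y} = X ⁻¹' C y ∩ Y ⁻¹' {y} := by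
      ext ω
      simp +contextual only [Set.mem_inter_iff, Set.mem_ofPred_eq, Set.mem_preimage,
        Set.mem_singleton_iff, and_congr_left_iff, implies_true]
    rw [measure_eq_tsum_measure_inter_preimage_singleton fun y => by
      rw [hfiber]; exact (hX (hC y)).inter (hY (measurableSet_singleton y))]
    simp_rw [hfiber]
    exact tsum_congr fun y =>
      hXY.measure_inter_preimage_eq_mul _ _ (hC y) (measurableSet_singleton y)
  rw [hsplit A hA, hsplit B hB, ← ENNReal.tsum_mul_left]
  refine ENNReal.tsum_le_tsum fun y => ?_
  rw [← mul_assoc]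
  gcongr
  exact hAB y

namespace ProbabilityTheory

lemma poissonMeasure_singleton_add_le (r : ℝ≥0) (m k : ℕ) :
    Po(r) {m + k} ≤ ENNReal.ofReal (r ^ m / m !) * Po(r) {k} := by
  rw [poissonMeasure_singleton, poissonMeasure_singleton, ← ENNReal.ofReal_mul (by positivity)]
  refine ENNReal.ofReal_le_ofReal ?_
  have hfac : (m ! * k ! : ℝ) ≤ (m + k)! :=
    mod_cast Nat.le_of_dvd (Nat.factorial_pos _)
      (Nat.factorial_mul_factorial_dvd_factorial_add m k)
  calc Real.exp (-r) * r ^ (m + k) / (m + k)!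
      ≤ Real.exp (-r) * r ^ (m + k) / (m ! * k !) := by gcongr
    _ = r ^ m / m ! * (Real.exp (-r) * r ^ k / k !) := by
      rw [pow_add]; field_simp

lemma poissonMeasure_Ici_le (r : ℝ≥0) (m : ℕ) :
    Po(r) (Set.Ici m) ≤ ENNReal.ofReal (r ^ m / m !) := by
  have hIci : Set.Ici m = ⋃ k, {m + k} := by
    ext n
    simp [le_iff_exists_add, eq_comm]
  calc Po(r) (Set.Ici m) ≤ ∑' k, Po(r) {m + k} := hIci ▸ measure_iUnion_le _
    _ ≤ ∑' k, ENNReal.ofReal (r ^ m / m !) * Po(r) {k} :=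
      ENNReal.tsum_le_tsum (poissonMeasure_singleton_add_le r m)
    _ = ENNReal.ofReal (r ^ m / m !) := by
      simp_rw [poissonMeasure_singleton]
      rw [ENNReal.tsum_mul_left, ← ENNReal.ofReal_tsum_of_nonneg (fun _ => by positivity)
        (hasSum_one_poissonMeasure r).summable, (hasSum_one_poissonMeasure r).tsum_eq,
        ENNReal.ofReal_one, mul_one]

lemma poissonMeasure_Ioi_le (r : ℝ≥0) (n : ℕ) :
    Po(r) (Set.Ioi n) ≤ ENNReal.ofReal (r * Real.exp r) * Po(r) {n} := by
  rw [← Order.Ici_succ, poissonMeasure_singleton,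
    ← ENNReal.ofReal_mul (by positivity)]
  refine (poissonMeasure_Ici_le r _).trans (ENNReal.ofReal_le_ofReal ?_)
  calc (r : ℝ) ^ (n + 1) / (n + 1)! ≤ r ^ (n + 1) / n ! := by
        gcongr
        exact n.le_succ
    _ = r * Real.exp r * (Real.exp (-r) * r ^ n / n !) := by
      rw [Real.exp_neg]; field_simp; ring

lemma hasLaw_poissonMeasure {Ω : Type*} {mΩ : MeasurableSpace Ω} {P : Measure Ω} {ϑ : Ω → ℕ}
    (hϑ : Measurable ϑ) {r : ℝ≥0}
    (h : ∀ k, P {ω | ϑ ω = k} = ENNReal.ofReal (Real.exp (-r) * r ^ k / k !)) :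
    HasLaw ϑ Po(r) P where
  map_eq := Measure.ext_of_singleton fun k => by
    rw [Measure.map_apply hϑ (measurableSet_singleton k), poissonMeasure_singleton, ← h]
    rfl

end ProbabilityTheory

theorem stmt7_general {Ω : Type*} [MeasurableSpace Ω] (P : Measure Ω)
    (b : ℝ) (hb : 0 < b) (ϑ : Ω → ℕ) (N : Ω → ℕ∞)
    (hϑm : Measurable ϑ) (hNm : Measurable N)
    (hpois : ∀ k : ℕ, P {ω | ϑ ω = k} =
      ENNReal.ofReal (Real.exp (-b) * b ^ k / (Nat.factorial k)))
    (hindep : IndepFun ϑ N P) :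
    P {ω | 0 < N ω ∧ N ω ≤ (ϑ ω : ℕ∞)} ≤
      ENNReal.ofReal (b * Real.exp b) * P {ω | N ω = (ϑ ω : ℕ∞) + 1} := by
  let r : ℝ≥0 := ⟨b, hb.le⟩
  refine hindep.measure_setOf_mem_le_mul (A := fun x => {k | 0 < x ∧ x ≤ k})
    (B := fun x => {k | x = k + 1}) hϑm hNm (fun _ => .of_discrete) (fun _ => .of_discrete)
    fun x => ?_
  have hϑ_law (s : Set ℕ) : P (ϑ ⁻¹' s) = Po(r) s :=
    (hasLaw_poissonMeasure (r := r) hϑm hpois).measure_eq (p := (· ∈ s)) .of_discrete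
  rw [hϑ_law, hϑ_law]
  induction x using ENat.recTopCoe with
  | top => simp
  | coe n =>
    cases n with
    | zero => simp
    | succ n =>
      have hA : {k : ℕ | 0 < ((n + 1 : ℕ) : ℕ∞) ∧ ((n + 1 : ℕ) : ℕ∞) ≤ k} = Set.Ioi n := by
        ext k; simp only [Set.mem_ofPred_eq, Set.mem_Ioi]; norm_cast; omega
      have hB : {k : ℕ | ((n + 1 : ℕ) : ℕ∞) = k + 1} = {n} := by
        ext k; simp [eq_comm]
      rw [hA, hB]
      exact poissonMeasure_Ioi_le r n

/-- If ϑ ~ Po(b) with b > 0 and N is an ℕ₀ ∪ {∞}-valued random variable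
independent of ϑ, then P(0 < N ≤ ϑ) ≤ b e^b · P(N = ϑ + 1). -/
theorem stmt7 {Ω : Type*} [MeasurableSpace Ω] (P : Measure Ω) [IsProbabilityMeasure P]
    (b : ℝ) (hb : 0 < b) (ϑ : Ω → ℕ) (N : Ω → ℕ∞)
    (hϑm : Measurable ϑ) (hNm : Measurable N)
    (hpois : ∀ k : ℕ, P {ω | ϑ ω = k} =
      ENNReal.ofReal (Real.exp (-b) * b ^ k / (Nat.factorial k)))
    (hindep : IndepFun ϑ N P) :
    P {ω | 0 < N ω ∧ N ω ≤ (ϑ ω : ℕ∞)} ≤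
      ENNReal.ofReal (b * Real.exp b) * P {ω | N ω = (ϑ ω : ℕ∞) + 1} :=
  stmt7_general P b hb ϑ N hϑm hNm hpois hindep
end
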